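/- There exist bounded linear operators A and B on the Hilbert space ℓ²(ℕ) such that A is self-adjoint (hence normal), both AB and BA are hyponormal, but AA*B ≠ BAA*. Concretely, one may take A the diagonal operator Aeₙ = αₙeₙ with (αₙ) a bounded increasing sequence of nonnegative reals satisfying α₁ ≠ α₂, and B the unilateral shift Beₙ = e_{n+1} on the standard orthonormal basis (eₙ). -/

import Mathlib

/-! Take `A` diagonal with weights `α = (0, 1, 1, …)` and `B` the unilateral shift. As `A` is
self-adjoint, `(AB)* x = (α_{n+1} x_{n+1})ₙ` and `(BA)* x = (α_n x_{n+1})ₙ`, whereas `ABx` and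
`BAx` carry `α_{n+2} x_{n+1}` and `α_{n+1} x_{n+1}` in position `n + 2`. Monotonicity of `|α|`
thus dominates the coordinates of `T* x` by those of `T x` along an injective reindexing, which
gives hyponormality. On the other hand `A²B e₀ = α₁² e₁` while `BA² e₀ = α₀² e₁`. -/

open ContinuousLinearMap

/-- The Hilbert space `ℓ²(ℕ)` of square-summable complex sequences. -/
noncomputable abbrev ellTwo : Type := lp (fun _ : ℕ => ℂ) 2

/-- The standard orthonormal basis of `ℓ²(ℕ)`. -/
noncomputable def stdBasis (n : ℕ) : ellTwo := lp.single 2 n 1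

/-- A bounded operator `T` is *hyponormal* if `‖T* x‖ ≤ ‖T x‖` for all `x`. -/
def IsHyponormalOp {H : Type*} [NormedAddCommGroup H] [InnerProductSpace ℂ H] [CompleteSpace H]
    (T : H →L[ℂ] H) : Prop :=
  ∀ x : H, ‖adjoint T x‖ ≤ ‖T x‖

open scoped ENNReal lp InnerProductSpace

theorem lp.norm_le_of_norm_le_comp {ι E : Type*} [NormedAddCommGroup E] {p : ℝ≥0∞}
    (hp : 0 < p.toReal) {f g : lp (fun _ : ι => E) p} {e : ι → ι} (he : e.Injective)
    (h : ∀ i, ‖f i‖ ≤ ‖g (e i)‖) : ‖f‖ ≤ ‖g‖ := by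
  refine lp.norm_le_of_forall_sum_le hp (lp.norm_nonneg' g) fun s => ?_
  calc ∑ i ∈ s, ‖f i‖ ^ p.toReal
      ≤ ∑ i ∈ s, ‖g (e i)‖ ^ p.toReal := by gcongr with i; exact h i
    _ = ∑ j ∈ s.map ⟨e, he⟩, ‖g j‖ ^ p.toReal := by rw [Finset.sum_map]; rfl
    _ ≤ ‖g‖ ^ p.toReal := lp.sum_rpow_le_norm_rpow hp g _

namespace lp

variable {𝕜 : Type*} [RCLike 𝕜]

section Diagonal

variable {ι : Type*} (w : ℓ^∞(ι, ℝ))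

theorem norm_ofReal_mul_le (i : ι) (a : 𝕜) : ‖(w i : 𝕜) * a‖ ≤ ‖w‖ * ‖a‖ := by
  rw [norm_mul, RCLike.norm_ofReal, ← Real.norm_eq_abs]
  gcongr
  exact lp.norm_apply_le_norm ENNReal.top_ne_zero w i

noncomputable def diagonal : ℓ²(ι, 𝕜) →L[𝕜] ℓ²(ι, 𝕜) :=
  LinearMap.mkContinuous
    { toFun := fun x => ⟨fun i => (w i : 𝕜) * x i,
        ((lp.memℓp x).norm.const_mul ‖w‖).mono fun i => norm_ofReal_mul_le w i (x i)⟩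
      map_add' := fun x y => lp.ext <| funext fun i => mul_add _ (x i) (y i)
      map_smul' := fun c x => lp.ext <| funext fun i => mul_left_comm _ c (x i) }
    ‖w‖ fun x => calc
      _ ≤ ‖((‖w‖ : ℝ) : 𝕜) • x‖ := lp.norm_mono two_ne_zero fun i => by
          rw [lp.coeFn_smul, Pi.smul_apply, smul_eq_mul, norm_mul, RCLike.norm_ofReal, abs_norm]
          exact norm_ofReal_mul_le w i (x i)
      _ = ‖w‖ * ‖x‖ := by rw [lp.norm_const_smul two_ne_zero, RCLike.norm_ofReal, abs_norm]

@[simp]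
theorem diagonal_apply (x : ℓ²(ι, 𝕜)) (i : ι) : diagonal w x i = w i * x i := rfl

theorem isSelfAdjoint_diagonal : IsSelfAdjoint (diagonal (𝕜 := 𝕜) w) := by
  refine LinearMap.IsSymmetric.isSelfAdjoint fun x y => ?_
  simp only [ContinuousLinearMap.coe_coe, lp.inner_eq_tsum, diagonal_apply, RCLike.inner_apply,
    map_mul, RCLike.conj_ofReal]
  exact tsum_congr fun i => by ring

theorem diagonal_mul_diagonal (v : ℓ^∞(ι, ℝ)) :
    diagonal (𝕜 := 𝕜) w * diagonal v = diagonal (w * v) := by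
  ext x i
  simp [lp.infty_coeFn_mul, mul_assoc]

theorem diagonal_single [DecidableEq ι] (i : ι) (a : 𝕜) :
    diagonal w (lp.single 2 i a) = (w i : 𝕜) • lp.single 2 i a := by
  ext j
  rcases eq_or_ne j i with rfl | hj
  · simp [RCLike.real_smul_eq_coe_mul]
  · simp [hj]

end Diagonal

section Shift

noncomputable def leftShift : ℓ²(ℕ, 𝕜) →L[𝕜] ℓ²(ℕ, 𝕜) :=
  LinearMap.mkContinuous
    { toFun := fun x => ⟨fun n => x (n + 1),
        memℓp_gen <| (summable_nat_add_iff 1).2 <| (lp.memℓp x).summable (by norm_num)⟩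
      map_add' := fun _ _ => rfl
      map_smul' := fun _ _ => rfl }
    1 fun x => by
      rw [one_mul]
      exact lp.norm_le_of_norm_le_comp (by norm_num) Nat.succ_injective fun n => le_rfl

@[simp]
theorem leftShift_apply (x : ℓ²(ℕ, 𝕜)) (n : ℕ) : leftShift x n = x (n + 1) := rfl

theorem leftShift_single_zero (a : 𝕜) : leftShift (lp.single 2 0 a) = 0 := by
  ext n
  simp

theorem leftShift_single_succ (n : ℕ) (a : 𝕜) :
    leftShift (lp.single 2 (n + 1) a) = lp.single 2 n a := by
  ext m
  simp [Pi.single_apply]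

/-- Defined as the adjoint of the backward shift, so that boundedness and
`adjoint rightShift = leftShift` come for free. -/
noncomputable def rightShift : ℓ²(ℕ, 𝕜) →L[𝕜] ℓ²(ℕ, 𝕜) := adjoint leftShift

theorem adjoint_rightShift : adjoint (rightShift (𝕜 := 𝕜)) = leftShift :=
  adjoint_adjoint _

theorem rightShift_apply (x : ℓ²(ℕ, 𝕜)) (n : ℕ) :
    rightShift x n = ⟪leftShift (lp.single 2 n 1), x⟫_𝕜 := by
  rw [rightShift, ← adjoint_inner_right, lp.inner_single_left, RCLike.inner_apply', map_one,
    one_mul]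

@[simp]
theorem rightShift_apply_zero (x : ℓ²(ℕ, 𝕜)) : rightShift x 0 = 0 := by
  rw [rightShift_apply, leftShift_single_zero, inner_zero_left]

@[simp]
theorem rightShift_apply_succ (x : ℓ²(ℕ, 𝕜)) (n : ℕ) : rightShift x (n + 1) = x n := by
  rw [rightShift_apply, leftShift_single_succ, lp.inner_single_left, RCLike.inner_apply', map_one,
    one_mul]

theorem rightShift_single (n : ℕ) (a : 𝕜) :
    rightShift (lp.single 2 n a) = lp.single 2 (n + 1) a := by
  ext m
  cases m <;> simp [Pi.single_apply]

end Shift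

theorem diagonal_mul_rightShift_ne {w : ℓ^∞(ℕ, ℝ)} (hw : w 0 ≠ w 1) :
    diagonal (𝕜 := 𝕜) w * rightShift ≠ rightShift * diagonal w := by
  intro hcomm
  have h := congrArg (fun T => T (lp.single 2 0 1) 1) hcomm
  simp only [mul_apply_eq_comp, diagonal_apply, rightShift_apply_succ, lp.single_apply,
    Pi.single_eq_same, mul_one, algebraMap.coe_inj] at h
  exact hw h.symm

section Hyponormal

variable (w : ℓ^∞(ℕ, ℝ))

theorem isHyponormalOp_diagonal_mul_rightShift (hw : Monotone fun n => |w n|) :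
    IsHyponormalOp (diagonal (𝕜 := ℂ) w * rightShift) := by
  intro x
  rw [← star_eq_adjoint, star_mul, (isSelfAdjoint_diagonal w).star_eq, star_eq_adjoint,
    adjoint_rightShift]
  refine lp.norm_le_of_norm_le_comp (by norm_num) (add_left_injective 2) fun n => ?_
  simp only [mul_apply_eq_comp, diagonal_apply, leftShift_apply, rightShift_apply_succ, norm_mul,
    RCLike.norm_ofReal]
  exact mul_le_mul_of_nonneg_right (hw n.succ.le_succ) (norm_nonneg _)

theorem isHyponormalOp_rightShift_mul_diagonal (hw : Monotone fun n => |w n|) :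
    IsHyponormalOp (rightShift * diagonal (𝕜 := ℂ) w) := by
  intro x
  rw [← star_eq_adjoint, star_mul, (isSelfAdjoint_diagonal w).star_eq, star_eq_adjoint,
    adjoint_rightShift]
  refine lp.norm_le_of_norm_le_comp (by norm_num) (add_left_injective 2) fun n => ?_
  simp only [mul_apply_eq_comp, diagonal_apply, leftShift_apply, rightShift_apply_succ, norm_mul,
    RCLike.norm_ofReal]
  exact mul_le_mul_of_nonneg_right (hw n.le_succ) (norm_nonneg _)

end Hyponormal

end lp

/-- There are bounded operators `A`, `B` on `ℓ²(ℕ)` with `A` self-adjoint (hence normal),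
both products `AB` and `BA` hyponormal, but `A A* B ≠ B A A*`: one may take `A` diagonal
with a bounded increasing sequence `(αₙ)` of nonnegative reals with `α₁ ≠ α₂`, and `B`
the unilateral shift. -/
theorem exists_counterexample :
    ∃ (α : ℕ → ℝ) (A B : ellTwo →L[ℂ] ellTwo),
      (∀ n, 0 ≤ α n) ∧ Monotone α ∧ BddAbove (Set.range α) ∧ α 0 ≠ α 1 ∧
      (∀ n, A (stdBasis n) = (α n : ℂ) • stdBasis n) ∧
      (∀ n, B (stdBasis n) = stdBasis (n + 1)) ∧
      IsSelfAdjoint A ∧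
      IsHyponormalOp (A * B) ∧ IsHyponormalOp (B * A) ∧
      A * adjoint A * B ≠ B * (A * adjoint A) := by
  let w : ℓ^∞(ℕ, ℝ) := ⟨fun n => min (n : ℝ) 1,
    memℓp_infty ⟨1, Set.forall_mem_range.2 fun n => by
      rw [Real.norm_of_nonneg (le_min n.cast_nonneg zero_le_one)]
      exact min_le_right _ _⟩⟩
  have hw_nonneg (n : ℕ) : 0 ≤ w n := le_min n.cast_nonneg zero_le_one
  have hw_mono : Monotone w := fun m n h => min_le_min_right 1 (Nat.cast_le.2 h)
  have hw_abs : Monotone fun n => |w n| := by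
    simpa only [abs_of_nonneg (hw_nonneg _)] using hw_mono
  refine ⟨w, lp.diagonal w, lp.rightShift, hw_nonneg, hw_mono,
    ⟨1, Set.forall_mem_range.2 fun n => min_le_right _ _⟩, by norm_num [w],
    fun n => lp.diagonal_single w n 1, fun n => lp.rightShift_single n 1,
    lp.isSelfAdjoint_diagonal w,
    lp.isHyponormalOp_diagonal_mul_rightShift w hw_abs,
    lp.isHyponormalOp_rightShift_mul_diagonal w hw_abs, ?_⟩
  rw [(lp.isSelfAdjoint_diagonal w).adjoint_eq, lp.diagonal_mul_diagonal]
  exact lp.diagonal_mul_rightShift_ne (by norm_num [w, lp.infty_coeFn_mul])
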